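/- arXiv:1412.0589 — 4 statements merged into one kernel-verified Lean document; each statement's English description precedes it below -/
import Mathlib

section
/- For every z ∈ 𝔻, the map F is conformal at z, i.e. ‖∂F/∂x(z)‖ = ‖∂F/∂y(z)‖ and ⟨∂F/∂x(z), ∂F/∂y(z)⟩ = 0, if and only if f₁'(z)f₂'(z) + f₃'(z)f₄'(z) = 0. In particular, F is conformal on all of 𝔻 if and only if f₁'f₂' + f₃'f₄' ≡ 0 on 𝔻. -/
open Complex ComplexConjugate Metric

/-- The Euclidean inner product on `ℝ⁴ ≅ ℂ²`. -/
noncomputable def inner4 (u v : ℂ × ℂ) : ℝ :=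
  (u.1 * conj v.1).re + (u.2 * conj v.2).re

/-- The Euclidean norm on `ℝ⁴ ≅ ℂ²`. -/
noncomputable def norm4 (u : ℂ × ℂ) : ℝ :=
  Real.sqrt (Complex.normSq u.1 + Complex.normSq u.2)

/-! With `a = f₁'(z)`, …, `d = f₄'(z)`, the real derivative of `F` sends `v` to
`(a v + conj (b v), c v + conj (d v))`. For the images of `1` and `I`, the difference of the
squared norms is `4 Re (ab + cd)` and the inner product is `-2 Im (ab + cd)`. -/

open ContinuousLinearMap in
theorem HasDerivAt.hasFDerivAt_add_conj {f g : ℂ → ℂ} {a b z : ℂ}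
    (hf : HasDerivAt f a z) (hg : HasDerivAt g b z) :
    HasFDerivAt (fun w => f w + conj (g w))
      ((toSpanSingleton ℂ a).restrictScalars ℝ +
        conjCLE.toContinuousLinearMap ∘L (toSpanSingleton ℂ b).restrictScalars ℝ) z :=
  (hf.hasFDerivAt.restrictScalars ℝ).add
    (conjCLE.hasFDerivAt.comp z (hg.hasFDerivAt.restrictScalars ℝ))

theorem fderiv_apply_of_eq_add_conj {f₁ f₂ f₃ f₄ : ℂ → ℂ} {a b c d z : ℂ}
    (h₁ : HasDerivAt f₁ a z) (h₂ : HasDerivAt f₂ b z)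
    (h₃ : HasDerivAt f₃ c z) (h₄ : HasDerivAt f₄ d z)
    {F : ℂ → ℂ × ℂ} (hF : ∀ w, F w = (f₁ w + conj (f₂ w), f₃ w + conj (f₄ w))) (v : ℂ) :
    fderiv ℝ F z v = (a * v + conj (b * v), c * v + conj (d * v)) := by
  rw [funext hF, ((h₁.hasFDerivAt_add_conj h₂).prodMk (h₃.hasFDerivAt_add_conj h₄)).fderiv]
  simp [mul_comm]

theorem normSq_add_conj_sub_normSq_mul_I_add_conj (a b : ℂ) :
    normSq (a + conj b) - normSq (a * I + conj (b * I)) = 4 * (a * b).re := by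
  simp only [normSq_apply, add_re, add_im, mul_re, mul_im, conj_re, conj_im, I_re, I_im]
  ring

theorem re_add_conj_mul_conj_mul_I_add_conj (a b : ℂ) :
    ((a + conj b) * conj (a * I + conj (b * I))).re = -2 * (a * b).im := by
  simp only [add_re, add_im, mul_re, mul_im, conj_re, conj_im, I_re, I_im]
  ring

theorem norm4_eq_and_inner4_eq_zero_iff (a b c d : ℂ) :
    (norm4 (a + conj b, c + conj d) = norm4 (a * I + conj (b * I), c * I + conj (d * I)) ∧
      inner4 (a + conj b, c + conj d) (a * I + conj (b * I), c * I + conj (d * I)) = 0) ↔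
    a * b + c * d = 0 := by
  have hnorm : norm4 (a + conj b, c + conj d) = norm4 (a * I + conj (b * I), c * I + conj (d * I))
      ↔ (a * b + c * d).re = 0 := by
    have hdiff : (normSq (a + conj b) + normSq (c + conj d)) -
        (normSq (a * I + conj (b * I)) + normSq (c * I + conj (d * I))) =
        4 * (a * b + c * d).re := by
      rw [add_re, mul_add, ← normSq_add_conj_sub_normSq_mul_I_add_conj,
        ← normSq_add_conj_sub_normSq_mul_I_add_conj]
      ring
    rw [norm4, norm4, Real.sqrt_inj (add_nonneg (normSq_nonneg _) (normSq_nonneg _))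
      (add_nonneg (normSq_nonneg _) (normSq_nonneg _)), ← sub_eq_zero, hdiff]
    simp
  have hinner : inner4 (a + conj b, c + conj d) (a * I + conj (b * I), c * I + conj (d * I)) =
      -2 * (a * b + c * d).im := by
    rw [inner4, re_add_conj_mul_conj_mul_I_add_conj, re_add_conj_mul_conj_mul_I_add_conj, add_im]
    ring
  rw [hnorm, hinner, Complex.ext_iff]
  simp

/-- With `F(z) = (f₁ z + conj (f₂ z), f₃ z + conj (f₄ z))`, `f₁,…,f₄`
holomorphic on the unit disk, `F` is conformal at `z ∈ 𝔻` iff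
`f₁'(z)f₂'(z) + f₃'(z)f₄'(z) = 0`; in particular `F` is conformal on all of `𝔻` iff
`f₁'f₂' + f₃'f₄' ≡ 0` on `𝔻`. -/
theorem conformal_iff_quadratic_relation
    (f₁ f₂ f₃ f₄ f₁' f₂' f₃' f₄' : ℂ → ℂ)
    (hf₁ : ∀ z ∈ ball (0:ℂ) 1, HasDerivAt f₁ (f₁' z) z)
    (hf₂ : ∀ z ∈ ball (0:ℂ) 1, HasDerivAt f₂ (f₂' z) z)
    (hf₃ : ∀ z ∈ ball (0:ℂ) 1, HasDerivAt f₃ (f₃' z) z)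
    (hf₄ : ∀ z ∈ ball (0:ℂ) 1, HasDerivAt f₄ (f₄' z) z)
    (F : ℂ → ℂ × ℂ)
    (hF : ∀ z, F z = (f₁ z + conj (f₂ z), f₃ z + conj (f₄ z))) :
    (∀ z ∈ ball (0:ℂ) 1,
      (norm4 (fderiv ℝ F z 1) = norm4 (fderiv ℝ F z Complex.I) ∧
        inner4 (fderiv ℝ F z 1) (fderiv ℝ F z Complex.I) = 0) ↔
      f₁' z * f₂' z + f₃' z * f₄' z = 0) ∧
    ((∀ z ∈ ball (0:ℂ) 1,
      norm4 (fderiv ℝ F z 1) = norm4 (fderiv ℝ F z Complex.I) ∧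
        inner4 (fderiv ℝ F z 1) (fderiv ℝ F z Complex.I) = 0) ↔
      (∀ z ∈ ball (0:ℂ) 1, f₁' z * f₂' z + f₃' z * f₄' z = 0)) := by
  have pointwise : ∀ z ∈ ball (0:ℂ) 1,
      (norm4 (fderiv ℝ F z 1) = norm4 (fderiv ℝ F z Complex.I) ∧
        inner4 (fderiv ℝ F z 1) (fderiv ℝ F z Complex.I) = 0) ↔
      f₁' z * f₂' z + f₃' z * f₄' z = 0 := by
    intro z hz
    have hderiv := fderiv_apply_of_eq_add_conj (hf₁ z hz) (hf₂ z hz) (hf₃ z hz) (hf₄ z hz) hF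
    rw [hderiv, hderiv]
    simpa only [mul_one] using norm4_eq_and_inner4_eq_zero_iff _ _ _ _
  exact ⟨pointwise, forall₂_congr pointwise⟩
end

section
/- For every A ∈ ℂ^{n₁+1}, B ∈ ℂ^{n₄+1} and every z ∈ 𝔻, the negative-case deformation functions satisfy k₁(z,A,B)·k₂(z,A,B) + k₃(z,A,B)·k₄(z,A,B) = 0 and k₄(z,A,B)·f₂'(z) = k₂(z,A,B)·f₄'(z); i.e. wherever defined, k₄/k₂ = f₄'/f₂', so the deformed map has the same negative Gauss map γ₋ as F. -/
open Complex ComplexConjugate Metric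

/-- The monic-plus-perturbation polynomial `P_A(z) = z^n + Σ_{i=0}^n aᵢ zⁱ`. -/
noncomputable def Ppoly (n : ℕ) (A : Fin (n + 1) → ℂ) (z : ℂ) : ℂ :=
  z ^ n + ∑ i : Fin (n + 1), A i * z ^ (i : ℕ)

/-- The negative-case deformation functions
`k₁ = P_A t₁`, `k₂ = z^{n₂−n₄} R_B t₂`, `k₃ = z^{n₃−n₁} P_A t₃`, `k₄ = R_B t₄`
satisfy `k₁k₂ + k₃k₄ = 0` and `k₄·f₂' = k₂·f₄'` on the unit disk: the deformed map
is minimal and has the same negative Gauss map as `F`. -/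
theorem negative_deformation_relations
    (n₁ n₂ n₃ n₄ : ℕ)
    (h12 : n₁ < n₂) (h13 : n₁ < n₃) (h14 : n₁ < n₄) (h42 : n₄ < n₂)
    (hsum : n₁ + n₂ = n₃ + n₄)
    (t₁ t₂ t₃ t₄ f₁ f₂ f₃ f₄ : ℂ → ℂ)
    (ht₁ : DifferentiableOn ℂ t₁ (ball (0:ℂ) 1))
    (ht₂ : DifferentiableOn ℂ t₂ (ball (0:ℂ) 1))
    (ht₃ : DifferentiableOn ℂ t₃ (ball (0:ℂ) 1))
    (ht₄ : DifferentiableOn ℂ t₄ (ball (0:ℂ) 1))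
    (ht₁0 : t₁ 0 ≠ 0) (ht₂0 : t₂ 0 ≠ 0) (ht₃0 : t₃ 0 ≠ 0) (ht₄0 : t₄ 0 ≠ 0)
    (hf₁ : ∀ z ∈ ball (0:ℂ) 1, HasDerivAt f₁ (z ^ n₁ * t₁ z) z)
    (hf₂ : ∀ z ∈ ball (0:ℂ) 1, HasDerivAt f₂ (z ^ n₂ * t₂ z) z)
    (hf₃ : ∀ z ∈ ball (0:ℂ) 1, HasDerivAt f₃ (z ^ n₃ * t₃ z) z)
    (hf₄ : ∀ z ∈ ball (0:ℂ) 1, HasDerivAt f₄ (z ^ n₄ * t₄ z) z)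
    (hconf : ∀ z ∈ ball (0:ℂ) 1,
      (z ^ n₁ * t₁ z) * (z ^ n₂ * t₂ z) + (z ^ n₃ * t₃ z) * (z ^ n₄ * t₄ z) = 0) :
    ∀ (A : Fin (n₁ + 1) → ℂ) (B : Fin (n₄ + 1) → ℂ), ∀ z ∈ ball (0:ℂ) 1,
      (Ppoly n₁ A z * t₁ z) * (z ^ (n₂ - n₄) * (Ppoly n₄ B z * t₂ z)) +
        (z ^ (n₃ - n₁) * (Ppoly n₁ A z * t₃ z)) * (Ppoly n₄ B z * t₄ z) = 0 ∧
      (Ppoly n₄ B z * t₄ z) * (z ^ n₂ * t₂ z) =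
        (z ^ (n₂ - n₄) * (Ppoly n₄ B z * t₂ z)) * (z ^ n₄ * t₄ z) := by
  -- key: t₁t₂ + t₃t₄ = 0 on the ball
  have key : ∀ z ∈ ball (0:ℂ) 1, t₁ z * t₂ z + t₃ z * t₄ z = 0 := by
    have hne : ∀ z ∈ ball (0:ℂ) 1, z ≠ 0 → t₁ z * t₂ z + t₃ z * t₄ z = 0 := by
      intro z hz hz0
      have h := hconf z hz
      have h' : z ^ (n₁ + n₂) * (t₁ z * t₂ z + t₃ z * t₄ z) = 0 := by
        rw [mul_add]
        calc z ^ (n₁ + n₂) * (t₁ z * t₂ z) + z ^ (n₁ + n₂) * (t₃ z * t₄ z)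
            = (z ^ n₁ * t₁ z) * (z ^ n₂ * t₂ z) + (z ^ n₃ * t₃ z) * (z ^ n₄ * t₄ z) := by
              rw [hsum]; ring_nf; rw [← pow_add, ← pow_add, hsum]; ring
          _ = 0 := h
      exact (mul_eq_zero.mp h').resolve_left (pow_ne_zero _ hz0)
    intro z hz
    rcases eq_or_ne z 0 with rfl | hz0
    · -- continuity argument at 0
      set g : ℂ → ℂ := fun w => t₁ w * t₂ w + t₃ w * t₄ w with hg
      have hgd : DifferentiableOn ℂ g (ball (0:ℂ) 1) :=
        (ht₁.mul ht₂).add (ht₃.mul ht₄)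
      have hopen : IsOpen (ball (0:ℂ) 1) := isOpen_ball
      have hga : ContinuousAt g 0 :=
        (hgd.differentiableAt (hopen.mem_nhds hz)).continuousAt
      have h1 : Filter.Tendsto g (nhdsWithin 0 {(0:ℂ)}ᶜ) (nhds (g 0)) :=
        hga.continuousWithinAt.tendsto
      have h2 : Filter.Tendsto g (nhdsWithin 0 {(0:ℂ)}ᶜ) (nhds 0) := by
        have hev : ∀ᶠ w in nhdsWithin 0 {(0:ℂ)}ᶜ, g w = 0 := by
          filter_upwards [self_mem_nhdsWithin,
            nhdsWithin_le_nhds (hopen.mem_nhds hz)] with w hw1 hw2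
          exact hne w hw2 hw1
        exact Filter.Tendsto.congr' (hev.mono fun w h => h.symm) tendsto_const_nhds
      exact tendsto_nhds_unique h1 h2
    · exact hne z hz hz0
  intro A B z hz
  have hpow : z ^ (n₂ - n₄) * z ^ n₄ = z ^ n₂ := by
    rw [← pow_add, Nat.sub_add_cancel h42.le]
  have hpow' : n₃ - n₁ = n₂ - n₄ := by omega
  constructor
  · rw [hpow']
    have := key z hz
    calc (Ppoly n₁ A z * t₁ z) * (z ^ (n₂ - n₄) * (Ppoly n₄ B z * t₂ z)) +
          (z ^ (n₂ - n₄) * (Ppoly n₁ A z * t₃ z)) * (Ppoly n₄ B z * t₄ z)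
        = z ^ (n₂ - n₄) * Ppoly n₁ A z * Ppoly n₄ B z * (t₁ z * t₂ z + t₃ z * t₄ z) := by
          ring
      _ = 0 := by rw [this, mul_zero]
  · calc (Ppoly n₄ B z * t₄ z) * (z ^ n₂ * t₂ z)
        = (z ^ (n₂ - n₄) * z ^ n₄) * (Ppoly n₄ B z * t₂ z * t₄ z) := by rw [hpow]; ring
      _ = (z ^ (n₂ - n₄) * (Ppoly n₄ B z * t₂ z)) * (z ^ n₄ * t₄ z) := by ring
end

section
/- Let G₁, G₂, G₃, G₄ be holomorphic functions on 𝔻 with G₁'(0) ≠ 0, G₃'(0) ≠ 0, G₂'(0) = 0 and G₄'(0) = 0. Then there exist constants C > 0 and η > 0 such that for all z₁, z₂ with |z₁| < η and |z₂| < η: |(G₁(z₁) − G₁(z₂))·conj(G₃(z₁) − G₃(z₂)) − (G₄(z₁) − G₄(z₂))·conj(G₂(z₁) − G₂(z₂))| ≥ C·|z₁ − z₂|². -/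
open Complex ComplexConjugate Metric

/-- Key approximation lemma: for `G` holomorphic on the unit ball and `ε > 0`, near `0`
the difference `G z₁ - G z₂` is within `ε‖z₁-z₂‖` of `deriv G 0 * (z₁ - z₂)`. -/
lemma diff_approx (G : ℂ → ℂ) (hG : DifferentiableOn ℂ G (ball (0:ℂ) 1))
    {ε : ℝ} (hε : 0 < ε) :
    ∃ η > (0:ℝ), η ≤ 1 ∧ ∀ z₁ z₂ : ℂ, ‖z₁‖ < η → ‖z₂‖ < η →
      ‖G z₁ - G z₂ - deriv G 0 * (z₁ - z₂)‖ ≤ ε * ‖z₁ - z₂‖ := by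
  have hball : IsOpen (ball (0:ℂ) 1) := isOpen_ball
  have han : AnalyticOnNhd ℂ G (ball (0:ℂ) 1) := hG.analyticOnNhd hball
  have hderiv : AnalyticOnNhd ℂ (deriv G) (ball (0:ℂ) 1) := han.deriv
  have hcont : ContinuousAt (deriv G) 0 :=
    (hderiv 0 (by simp)).continuousAt
  rcases Metric.continuousAt_iff.1 hcont ε hε with ⟨δ, hδ, hδ'⟩
  refine ⟨min (min δ 1) 1, by positivity, min_le_right _ _, ?_⟩
  intro z₁ z₂ h₁ h₂
  set a := deriv G 0 with ha
  set s := ball (0:ℂ) (min (min δ 1) 1) with hs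
  have hsub : s ⊆ ball (0:ℂ) 1 := ball_subset_ball (min_le_right _ _)
  have hdiffat : ∀ x ∈ s, DifferentiableAt ℂ (fun z => G z - a * z) x := by
    intro x hx
    have : DifferentiableAt ℂ G x :=
      hG.differentiableAt (hball.mem_nhds (hsub hx))
    exact this.sub ((differentiableAt_id.const_mul a))
  have hderivF : ∀ x ∈ s, deriv (fun z => G z - a * z) x = deriv G x - a := by
    intro x hx
    have hGx : DifferentiableAt ℂ G x :=
      hG.differentiableAt (hball.mem_nhds (hsub hx))
    have h2 : HasDerivAt (fun z : ℂ => a * z) a x := by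
      simpa using (hasDerivAt_id x).const_mul a
    exact (hGx.hasDerivAt.sub h2).deriv
  have hbound : ∀ x ∈ s, ‖deriv (fun z => G z - a * z) x‖ ≤ ε := by
    intro x hx
    rw [hderivF x hx]
    have hxδ : dist x 0 < δ := by
      have : ‖x‖ < min (min δ 1) 1 := by simpa [hs, mem_ball, Complex.dist_eq] using hx
      simpa [Complex.dist_eq] using this.trans_le ((min_le_left _ _).trans (min_le_left _ _))
    exact le_of_lt (by simpa [Complex.dist_eq, ha] using hδ' hxδ)
  have hz₁ : z₁ ∈ s := by simpa [hs, mem_ball, Complex.dist_eq] using h₁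
  have hz₂ : z₂ ∈ s := by simpa [hs, mem_ball, Complex.dist_eq] using h₂
  have := (convex_ball (0:ℂ) _).norm_image_sub_le_of_norm_deriv_le hdiffat hbound hz₂ hz₁
  calc ‖G z₁ - G z₂ - a * (z₁ - z₂)‖
      = ‖(G z₁ - a * z₁) - (G z₂ - a * z₂)‖ := by ring_nf
    _ ≤ ε * ‖z₁ - z₂‖ := this

set_option maxHeartbeats 1000000 in
/-- If `G₁, G₂, G₃, G₄` are holomorphic on the unit disk with
`G₁'(0) ≠ 0`, `G₃'(0) ≠ 0`, `G₂'(0) = 0`, `G₄'(0) = 0`, then there are `C > 0` and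
`η > 0` such that for all `z₁, z₂` with `|z₁|, |z₂| < η`,
`|(G₁(z₁)−G₁(z₂))·conj(G₃(z₁)−G₃(z₂)) − (G₄(z₁)−G₄(z₂))·conj(G₂(z₁)−G₂(z₂))|
  ≥ C·|z₁−z₂|²`. -/
theorem determinant_lower_bound
    (G₁ G₂ G₃ G₄ : ℂ → ℂ)
    (hG₁ : DifferentiableOn ℂ G₁ (ball (0:ℂ) 1))
    (hG₂ : DifferentiableOn ℂ G₂ (ball (0:ℂ) 1))
    (hG₃ : DifferentiableOn ℂ G₃ (ball (0:ℂ) 1))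
    (hG₄ : DifferentiableOn ℂ G₄ (ball (0:ℂ) 1))
    (hG₁0 : deriv G₁ 0 ≠ 0) (hG₃0 : deriv G₃ 0 ≠ 0)
    (hG₂0 : deriv G₂ 0 = 0) (hG₄0 : deriv G₄ 0 = 0) :
    ∃ C > (0:ℝ), ∃ η > (0:ℝ), ∀ z₁ z₂ : ℂ, ‖z₁‖ < η → ‖z₂‖ < η →
      C * ‖z₁ - z₂‖ ^ 2 ≤
        ‖(G₁ z₁ - G₁ z₂) * conj (G₃ z₁ - G₃ z₂) -
          (G₄ z₁ - G₄ z₂) * conj (G₂ z₁ - G₂ z₂)‖ := by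
  set a := deriv G₁ 0
  set c := deriv G₃ 0
  have ha : 0 < ‖a‖ := norm_pos_iff.2 hG₁0
  have hc : 0 < ‖c‖ := norm_pos_iff.2 hG₃0
  set ε : ℝ := min ‖a‖ ‖c‖ / 4 with hε_def
  have hε : 0 < ε := by positivity
  obtain ⟨η₁, hη₁, _, h₁⟩ := diff_approx G₁ hG₁ hε
  obtain ⟨η₂, hη₂, _, h₂⟩ := diff_approx G₂ hG₂ hε
  obtain ⟨η₃, hη₃, _, h₃⟩ := diff_approx G₃ hG₃ hε
  obtain ⟨η₄, hη₄, _, h₄⟩ := diff_approx G₄ hG₄ hε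
  refine ⟨‖a‖ * ‖c‖ / 2, by positivity, min (min η₁ η₂) (min η₃ η₄), by positivity, ?_⟩
  intro z₁ z₂ hz₁ hz₂
  have hz₁₁ : ‖z₁‖ < η₁ := hz₁.trans_le ((min_le_left _ _).trans (min_le_left _ _))
  have hz₁₂ : ‖z₁‖ < η₂ := hz₁.trans_le ((min_le_left _ _).trans (min_le_right _ _))
  have hz₁₃ : ‖z₁‖ < η₃ := hz₁.trans_le ((min_le_right _ _).trans (min_le_left _ _))
  have hz₁₄ : ‖z₁‖ < η₄ := hz₁.trans_le ((min_le_right _ _).trans (min_le_right _ _))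
  have hz₂₁ : ‖z₂‖ < η₁ := hz₂.trans_le ((min_le_left _ _).trans (min_le_left _ _))
  have hz₂₂ : ‖z₂‖ < η₂ := hz₂.trans_le ((min_le_left _ _).trans (min_le_right _ _))
  have hz₂₃ : ‖z₂‖ < η₃ := hz₂.trans_le ((min_le_right _ _).trans (min_le_left _ _))
  have hz₂₄ : ‖z₂‖ < η₄ := hz₂.trans_le ((min_le_right _ _).trans (min_le_right _ _))
  set d : ℂ := z₁ - z₂ with hd
  have hεa : ε ≤ ‖a‖ / 4 := by
    rw [hε_def]; gcongr; exact min_le_left _ _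
  have hεc : ε ≤ ‖c‖ / 4 := by
    rw [hε_def]; gcongr; exact min_le_right _ _
  -- bounds on the four differences
  have H1 := h₁ z₁ z₂ hz₁₁ hz₂₁
  have H3 := h₃ z₁ z₂ hz₁₃ hz₂₃
  have H2 : ‖G₂ z₁ - G₂ z₂‖ ≤ ε * ‖d‖ := by
    have := h₂ z₁ z₂ hz₁₂ hz₂₂
    simpa [hG₂0] using this
  have H4 : ‖G₄ z₁ - G₄ z₂‖ ≤ ε * ‖d‖ := by
    have := h₄ z₁ z₂ hz₁₄ hz₂₄
    simpa [hG₄0] using this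
  -- lower bounds for G₁, G₃ differences
  have L1 : (‖a‖ - ε) * ‖d‖ ≤ ‖G₁ z₁ - G₁ z₂‖ := by
    have htri : ‖a * d‖ - ‖G₁ z₁ - G₁ z₂ - a * d‖ ≤ ‖G₁ z₁ - G₁ z₂‖ := by
      have h := norm_sub_norm_le (a*d) (a * d - (G₁ z₁ - G₁ z₂))
      have he : a * d - (a * d - (G₁ z₁ - G₁ z₂)) = G₁ z₁ - G₁ z₂ := by ring
      rw [he] at h
      simpa [norm_sub_rev] using h
    calc (‖a‖ - ε) * ‖d‖ = ‖a‖ * ‖d‖ - ε * ‖d‖ := by ring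
      _ ≤ ‖a * d‖ - ‖G₁ z₁ - G₁ z₂ - a * d‖ := by
          rw [norm_mul]; gcongr
      _ ≤ ‖G₁ z₁ - G₁ z₂‖ := htri
  have L3 : (‖c‖ - ε) * ‖d‖ ≤ ‖G₃ z₁ - G₃ z₂‖ := by
    have htri : ‖c * d‖ - ‖G₃ z₁ - G₃ z₂ - c * d‖ ≤ ‖G₃ z₁ - G₃ z₂‖ := by
      have h := norm_sub_norm_le (c*d) (c * d - (G₃ z₁ - G₃ z₂))
      have he : c * d - (c * d - (G₃ z₁ - G₃ z₂)) = G₃ z₁ - G₃ z₂ := by ring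
      rw [he] at h
      simpa [norm_sub_rev] using h
    calc (‖c‖ - ε) * ‖d‖ = ‖c‖ * ‖d‖ - ε * ‖d‖ := by ring
      _ ≤ ‖c * d‖ - ‖G₃ z₁ - G₃ z₂ - c * d‖ := by
          rw [norm_mul]; gcongr
      _ ≤ ‖G₃ z₁ - G₃ z₂‖ := htri
  have hd0 : (0:ℝ) ≤ ‖d‖ := norm_nonneg _
  -- main estimate
  have key : (‖a‖ - ε) * (‖c‖ - ε) * ‖d‖^2 - ε * ε * ‖d‖^2 ≤
      ‖(G₁ z₁ - G₁ z₂) * conj (G₃ z₁ - G₃ z₂) - (G₄ z₁ - G₄ z₂) * conj (G₂ z₁ - G₂ z₂)‖ := by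
    have htri : ‖(G₁ z₁ - G₁ z₂) * conj (G₃ z₁ - G₃ z₂)‖ -
        ‖(G₄ z₁ - G₄ z₂) * conj (G₂ z₁ - G₂ z₂)‖ ≤
        ‖(G₁ z₁ - G₁ z₂) * conj (G₃ z₁ - G₃ z₂) - (G₄ z₁ - G₄ z₂) * conj (G₂ z₁ - G₂ z₂)‖ :=
      norm_sub_norm_le _ _
    have hfirst : (‖a‖ - ε) * (‖c‖ - ε) * ‖d‖^2 ≤
        ‖(G₁ z₁ - G₁ z₂) * conj (G₃ z₁ - G₃ z₂)‖ := by
      rw [norm_mul, RCLike.norm_conj]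
      have h1 : (0:ℝ) ≤ ‖a‖ - ε := by nlinarith
      have h3 : (0:ℝ) ≤ ‖c‖ - ε := by nlinarith
      calc (‖a‖ - ε) * (‖c‖ - ε) * ‖d‖^2 = ((‖a‖ - ε) * ‖d‖) * ((‖c‖ - ε) * ‖d‖) := by ring
        _ ≤ ‖G₁ z₁ - G₁ z₂‖ * ‖G₃ z₁ - G₃ z₂‖ := by
            apply mul_le_mul L1 L3 (by positivity) (norm_nonneg _)
    have hsecond : ‖(G₄ z₁ - G₄ z₂) * conj (G₂ z₁ - G₂ z₂)‖ ≤ ε * ε * ‖d‖^2 := by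
      rw [norm_mul, RCLike.norm_conj]
      calc ‖G₄ z₁ - G₄ z₂‖ * ‖G₂ z₁ - G₂ z₂‖ ≤ (ε * ‖d‖) * (ε * ‖d‖) :=
            mul_le_mul H4 H2 (norm_nonneg _) (by positivity)
        _ = ε * ε * ‖d‖^2 := by ring
    linarith
  have hscal : ‖a‖ * ‖c‖ / 2 ≤ (‖a‖ - ε) * (‖c‖ - ε) - ε * ε := by
    have t1 : ε * ‖c‖ ≤ ‖a‖/4 * ‖c‖ := mul_le_mul_of_nonneg_right hεa hc.le
    have t2 : ε * ‖a‖ ≤ ‖c‖/4 * ‖a‖ := mul_le_mul_of_nonneg_right hεc ha.le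
    have expand : (‖a‖-ε)*(‖c‖-ε) - ε*ε = ‖a‖*‖c‖ - ε*‖c‖ - ε*‖a‖ := by ring
    rw [expand]
    linarith [t1, t2]
  have hconst : ‖a‖ * ‖c‖ / 2 * ‖d‖^2 ≤ (‖a‖ - ε) * (‖c‖ - ε) * ‖d‖^2 - ε * ε * ‖d‖^2 := by
    have := mul_le_mul_of_nonneg_right hscal (sq_nonneg ‖d‖)
    linarith [this]
  linarith
end

section
/- Define Φ : ℂ^{n₁+1} × ℂ^{n₃+1} × 𝔻 × 𝔻 → ℂ² × ℂ² by Φ(A,B,z₁,z₂) = (F(z₁,A,B), F(z₂,A,B)), and let Δ = {(v,v) : v ∈ ℂ²} ⊆ ℂ² × ℂ² be the diagonal, viewed as a real subspace of ℝ⁴ × ℝ⁴. Then there exists η > 0 such that for every (A,B) and every pair z₁ ≠ z₂ with |z₁| < η and |z₂| < η, the range of the real Fréchet derivative of Φ at (A,B,z₁,z₂) together with Δ spans all of ℝ⁴ × ℝ⁴; i.e. Φ is transverse to the diagonal at such points. -/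
/-!
Only the directions `a₀` and `b₀` of the coefficient space are needed. Each `gᵢ(A, B)` is the
primitive of an expression affine in the coefficients, so `gᵢ` is affine in `(A, B)`: moving `a₀`
by `δ` and `b₀` by `ε` adds `(δ u + conj (ε p), ε q + conj (δ v))` to `F`, where `u, p, q, v`
are primitives of `t₁`, `z^(n₂-n₃) t₂`, `t₃`, `z^(n₄-n₁) t₄`. Modulo the diagonal, transversality
at `(z₁, z₂)` is the solvability of the `ℝ`-linear system `δ Δu + conj (ε Δp) = x`,
`ε Δq + conj (δ Δv) = y` in the increments `Δ` from `z₂` to `z₁`, which holds as soon as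
`|Δv| |Δp| < |Δu| |Δq|`. At `0` the functions `u`, `q` have the nonzero strict derivatives
`t₁ 0`, `t₃ 0`, while `v`, `p` have strict derivative `0` since `n₄ > n₁` and `n₂ > n₃`; this gives
the inequality for `z₁ ≠ z₂` near `0`.
-/

open Complex ComplexConjugate Metric

open Set Filter Topology

theorem eqOn_ball_of_hasDerivAt {f g d : ℂ → ℂ}
    (hf : ∀ z ∈ ball (0:ℂ) 1, HasDerivAt f (d z) z) (hg : ∀ z ∈ ball (0:ℂ) 1, HasDerivAt g (d z) z)
    (h0 : f 0 = g 0) : EqOn f g (ball 0 1) :=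
  isOpen_ball.eqOn_of_deriv_eq (convex_ball 0 1).isPreconnected
    (fun z hz => (hf z hz).differentiableAt.differentiableWithinAt)
    (fun z hz => (hg z hz).differentiableAt.differentiableWithinAt)
    (fun z hz => by simp only [(hf z hz).deriv, (hg z hz).deriv]) (mem_ball_self one_pos) h0

theorem HasStrictDerivAt.eventually_norm_sub_sub_le {f : ℂ → ℂ} {a x : ℂ}
    (hf : HasStrictDerivAt f a x) {ε : ℝ} (hε : 0 < ε) :
    ∀ᶠ p in 𝓝 (x, x), ‖f p.1 - f p.2 - a * (p.1 - p.2)‖ ≤ ε * ‖p.1 - p.2‖ := by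
  filter_upwards [hf.isLittleO.def hε] with p hp
  simpa [mul_comm a] using hp

theorem HasStrictDerivAt.eventually_le_norm_sub {f : ℂ → ℂ} {a x : ℂ}
    (hf : HasStrictDerivAt f a x) {ε : ℝ} (hε : 0 < ε) :
    ∀ᶠ p in 𝓝 (x, x), (‖a‖ - ε) * ‖p.1 - p.2‖ ≤ ‖f p.1 - f p.2‖ := by
  filter_upwards [hf.eventually_norm_sub_sub_le hε] with p hp
  have := norm_sub_norm_le (a * (p.1 - p.2)) (f p.1 - f p.2)
  rw [norm_sub_rev (a * _), norm_mul] at this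
  linarith

theorem eventually_norm_mul_lt_norm_mul {u q v w : ℂ → ℂ} {a b x : ℂ} (ha : a ≠ 0) (hb : b ≠ 0)
    (hu : HasStrictDerivAt u a x) (hq : HasStrictDerivAt q b x)
    (hv : HasStrictDerivAt v 0 x) (hw : HasStrictDerivAt w 0 x) :
    ∀ᶠ p in 𝓝 (x, x), p.1 ≠ p.2 →
      ‖v p.1 - v p.2‖ * ‖w p.1 - w p.2‖ < ‖u p.1 - u p.2‖ * ‖q p.1 - q p.2‖ := by
  obtain ⟨ε, hε, hεa, hεb⟩ : ∃ ε > (0:ℝ), 3 * ε ≤ ‖a‖ ∧ 3 * ε ≤ ‖b‖ :=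
    ⟨min ‖a‖ ‖b‖ / 3, by positivity, by linarith [min_le_left ‖a‖ ‖b‖],
      by linarith [min_le_right ‖a‖ ‖b‖]⟩
  filter_upwards [hu.eventually_le_norm_sub hε, hq.eventually_le_norm_sub hε,
    hv.eventually_norm_sub_sub_le hε, hw.eventually_norm_sub_sub_le hε] with p hu hq hv hw hne
  simp only [zero_mul, sub_zero] at hv hw
  have hΔ : 0 < ‖p.1 - p.2‖ := norm_pos_iff.mpr (sub_ne_zero.mpr hne)
  calc ‖v p.1 - v p.2‖ * ‖w p.1 - w p.2‖ ≤ (ε * ‖p.1 - p.2‖) * (ε * ‖p.1 - p.2‖) :=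
        mul_le_mul hv hw (norm_nonneg _) (by positivity)
    _ < (2 * ε * ‖p.1 - p.2‖) * (2 * ε * ‖p.1 - p.2‖) := by nlinarith [mul_pos hε hΔ]
    _ ≤ ‖u p.1 - u p.2‖ * ‖q p.1 - q p.2‖ :=
        mul_le_mul (by nlinarith) (by nlinarith) (by positivity) (norm_nonneg _)

theorem Filter.Eventually.exists_forall_norm_lt {P : ℂ × ℂ → Prop}
    (h : ∀ᶠ p in 𝓝 ((0:ℂ), (0:ℂ)), P p) :
    ∃ η > (0:ℝ), ∀ z₁ z₂ : ℂ, ‖z₁‖ < η → ‖z₂‖ < η → P (z₁, z₂) := by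
  obtain ⟨η, hη, h⟩ := Metric.eventually_nhds_iff.mp h
  refine ⟨η, hη, fun z₁ z₂ h₁ h₂ => h (y := (z₁, z₂)) ?_⟩
  simpa [Prod.dist_eq] using And.intro h₁ h₂

/-- Cramer's rule in the unknowns `δ` and `conj ε`: the determinant `α * conj c - β * conj γ` does
not vanish because of `h`. -/
theorem exists_mul_add_conj_mul_eq {α β γ c : ℂ} (h : ‖β‖ * ‖γ‖ < ‖α‖ * ‖c‖) (x y : ℂ) :
    ∃ δ ε : ℂ, δ * α + conj (ε * γ) = x ∧ ε * c + conj (δ * β) = y := by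
  have hD : α * conj c - β * conj γ ≠ 0 := by
    intro h0
    have := congrArg norm (sub_eq_zero.mp h0)
    simp only [norm_mul, RCLike.norm_conj] at this
    linarith
  refine ⟨(x * conj c - conj y * conj γ) / (α * conj c - β * conj γ),
    conj ((α * conj y - β * x) / (α * conj c - β * conj γ)), ?_, ?_⟩
  · rw [map_mul, conj_conj, div_mul_eq_mul_div, div_mul_eq_mul_div, ← add_div,
      div_eq_iff hD]
    ring
  · apply (starRingEnd ℂ).injective
    simp only [map_add, map_mul, map_div₀, map_sub, conj_conj]
    have hD' : conj α * c - conj β * γ ≠ 0 := by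
      simpa using (map_ne_zero (starRingEnd ℂ)).mpr hD
    field_simp
    ring

theorem DifferentiableAt.fderiv_apply_eq_of_forall_add_smul {E F : Type*}
    [NormedAddCommGroup E] [NormedSpace ℝ E] [NormedAddCommGroup F] [NormedSpace ℝ F]
    {f : E → F} {p ξ : E} {V : F} (hf : DifferentiableAt ℝ f p)
    (hline : ∀ t : ℝ, f (p + t • ξ) = f p + t • V) : fderiv ℝ f p ξ = V := by
  rw [← hf.lineDeriv_eq_fderiv, lineDeriv, funext hline, deriv_const_add]
  simpa using ((hasDerivAt_id (0:ℝ)).smul_const V).deriv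

theorem Submodule.span_union_diagonal_eq_top {R M : Type*} [Ring R] [AddCommGroup M]
    [Module R M] {s : Set (M × M)} (h : ∀ w : M, ∃ v ∈ s, v.1 - v.2 = w) :
    Submodule.span R (s ∪ {q : M × M | q.1 = q.2}) = ⊤ := by
  refine eq_top_iff.mpr fun w _ => ?_
  obtain ⟨v, hv, hvw⟩ := h (w.1 - w.2)
  have hdiag : w - v ∈ {q : M × M | q.1 = q.2} := by
    show w.1 - v.1 = w.2 - v.2
    rw [sub_eq_sub_iff_sub_eq_sub, hvw]
  have := add_mem (Submodule.subset_span (R := R) (mem_union_right s hdiag))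
    (Submodule.subset_span (R := R) (mem_union_left _ hv))
  simpa using this

theorem span_range_fderiv_union_diagonal_eq_top {E F : Type*}
    [NormedAddCommGroup E] [NormedSpace ℝ E] [NormedAddCommGroup F] [NormedSpace ℝ F]
    {Φ : E → F × F} {p : E} (hΦ : DifferentiableAt ℝ Φ p)
    (h : ∀ w : F, ∃ ξ : E, ∃ V : F × F, (∀ t : ℝ, Φ (p + t • ξ) = Φ p + t • V) ∧ V.1 - V.2 = w) :
    Submodule.span ℝ (Set.range (fderiv ℝ Φ p) ∪ {q : F × F | q.1 = q.2}) = ⊤ := by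
  refine Submodule.span_union_diagonal_eq_top fun w => ?_
  obtain ⟨ξ, V, hline, hV⟩ := h w
  exact ⟨V, ⟨ξ, hΦ.fderiv_apply_eq_of_forall_add_smul hline⟩, hV⟩

theorem differentiableAt_twoPoint {E F : Type*} [NormedAddCommGroup E] [NormedSpace ℝ E]
    [NormedAddCommGroup F] [NormedSpace ℝ F] {f : E → ℂ → F} {x : E} {z₁ z₂ : ℂ}
    (h₁ : DifferentiableAt ℝ (fun q : E × ℂ => f q.1 q.2) (x, z₁))
    (h₂ : DifferentiableAt ℝ (fun q : E × ℂ => f q.1 q.2) (x, z₂)) :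
    DifferentiableAt ℝ (fun p : E × ℂ × ℂ => (f p.1 p.2.1, f p.1 p.2.2)) (x, z₁, z₂) := by
  have k₁ : DifferentiableAt ℝ (fun p : E × ℂ × ℂ => (p.1, p.2.1)) (x, z₁, z₂) := by fun_prop
  have k₂ : DifferentiableAt ℝ (fun p : E × ℂ × ℂ => (p.1, p.2.2)) (x, z₁, z₂) := by fun_prop
  exact (h₁.comp (x, z₁, z₂) k₁).prodMk (h₂.comp (x, z₁, z₂) k₂)

theorem Ppoly_single_sub_Ppoly_zero (n : ℕ) (i : Fin (n + 1)) (z : ℂ) :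
    Ppoly n (Pi.single i 1) z - Ppoly n 0 z = z ^ (i : ℕ) := by
  simp [Ppoly, Pi.single_apply]

theorem Ppoly_eq_Ppoly_zero_add_sum (n : ℕ) (C : Fin (n + 1) → ℂ) (z : ℂ) :
    Ppoly n C z = Ppoly n 0 z + ∑ i, C i * z ^ (i : ℕ) := by
  simp [Ppoly]

section PpolyPrimitiveFamily

variable {X : Type*} [NormedAddCommGroup X] [NormedSpace ℝ X] {n : ℕ}

/-- The `gᵢ` of the theorem form such families, with `x = (A, B)`, `c x` the coefficient vector
(`A` or `B`) that `gᵢ` depends on, and `w = tᵢ` or `w = z ^ k * tᵢ`. -/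
def IsPpolyPrimitiveFamily (g : X → ℂ → ℂ) (c : X →L[ℝ] Fin (n + 1) → ℂ) (w : ℂ → ℂ) : Prop :=
  ∀ x, g x 0 = 0 ∧ ∀ z ∈ ball (0:ℂ) 1, HasDerivAt (g x) (Ppoly n (c x) z * w z) z

namespace IsPpolyPrimitiveFamily

variable {g : X → ℂ → ℂ} {c : X →L[ℝ] Fin (n + 1) → ℂ} {w : ℂ → ℂ} {e : Fin (n + 1) → X}
  {z : ℂ}

theorem hasDerivAt_sub (hg : IsPpolyPrimitiveFamily g c w) (he : ∀ i, c (e i) = Pi.single i 1)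
    (i : Fin (n + 1)) (hz : z ∈ ball (0:ℂ) 1) :
    HasDerivAt (fun z => g (e i) z - g 0 z) (z ^ (i : ℕ) * w z) z := by
  refine ((hg (e i)).2 z hz |>.sub ((hg 0).2 z hz)).congr_deriv ?_
  rw [he, map_zero, ← sub_mul, Ppoly_single_sub_Ppoly_zero]

theorem hasStrictDerivAt_sub (hg : IsPpolyPrimitiveFamily g c w)
    (he : ∀ i, c (e i) = Pi.single i 1) (hw : ContinuousAt w 0) :
    HasStrictDerivAt (fun z => g (e 0) z - g 0 z) (w 0) 0 := by
  simpa using hasStrictDerivAt_of_hasDerivAt_of_continuousAt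
    (eventually_of_mem (ball_mem_nhds 0 one_pos) fun _ hz => hg.hasDerivAt_sub he 0 hz)
    ((continuousAt_id.pow _).mul hw)

theorem eqOn_add_sum (hg : IsPpolyPrimitiveFamily g c w) (he : ∀ i, c (e i) = Pi.single i 1)
    (x : X) : EqOn (g x) (fun z => g 0 z + ∑ i, c x i * (g (e i) z - g 0 z)) (ball 0 1) := by
  refine eqOn_ball_of_hasDerivAt (hg x).2 (fun z hz => ?_) (by simp [(hg _).1])
  refine (((hg 0).2 z hz).add (HasDerivAt.fun_sum fun i _ =>
    (hg.hasDerivAt_sub he i hz).const_mul (c x i))).congr_deriv ?_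
  rw [Ppoly_eq_Ppoly_zero_add_sum n (c x), map_zero, add_mul, Finset.sum_mul]
  simp only [mul_assoc]

theorem differentiableAt (hg : IsPpolyPrimitiveFamily g c w) (he : ∀ i, c (e i) = Pi.single i 1)
    (x : X) (hz : z ∈ ball (0:ℂ) 1) :
    DifferentiableAt ℝ (fun p : X × ℂ => g p.1 p.2) (x, z) := by
  have hU : ∀ i, DifferentiableAt ℝ ((fun z => g (e i) z - g 0 z) ∘ Prod.snd) (x, z) := fun i =>
    ((hg.hasDerivAt_sub he i hz).differentiableAt.restrictScalars ℝ).comp _ differentiableAt_snd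
  have h0 : DifferentiableAt ℝ (g 0 ∘ Prod.snd) (x, z) :=
    (((hg 0).2 z hz).differentiableAt.restrictScalars ℝ).comp _ differentiableAt_snd
  refine DifferentiableAt.congr_of_eventuallyEq (f := fun p : X × ℂ =>
    g 0 p.2 + ∑ i, c p.1 i * (g (e i) p.2 - g 0 p.2)) ?_ ?_
  · exact h0.add (DifferentiableAt.fun_sum fun i _ =>
      ((ContinuousLinearMap.proj i ∘L c).differentiableAt.comp _ differentiableAt_fst).mul (hU i))
  · filter_upwards [prod_mem_nhds univ_mem (isOpen_ball.mem_nhds hz)] with p hp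
    exact hg.eqOn_add_sum he p.1 hp.2

theorem apply_add_smul (hg : IsPpolyPrimitiveFamily g c w) (he : ∀ i, c (e i) = Pi.single i 1)
    {x y : X} {i : Fin (n + 1)} {a : ℂ} (hy : c y = Pi.single i a) (t : ℝ)
    (hz : z ∈ ball (0:ℂ) 1) : g (x + t • y) z = g x z + t * a * (g (e i) z - g 0 z) := by
  rw [hg.eqOn_add_sum he (x + t • y) hz, hg.eqOn_add_sum he x hz, map_add, map_smul, hy]
  simp only [Pi.add_apply, Pi.smul_apply, Pi.single_apply, smul_ite, real_smul, smul_zero,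
    add_mul, ite_mul, zero_mul, Finset.sum_add_distrib, Finset.sum_ite_eq', Finset.mem_univ,
    if_true]
  ring

end IsPpolyPrimitiveFamily

end PpolyPrimitiveFamily

section HarmonicPair

variable {X : Type*} [NormedAddCommGroup X] [NormedSpace ℝ X] {n m : ℕ}
  {cA : X →L[ℝ] Fin (n + 1) → ℂ} {cB : X →L[ℝ] Fin (m + 1) → ℂ}
  {eA : Fin (n + 1) → X} {eB : Fin (m + 1) → X} {g₁ g₂ g₃ g₄ : X → ℂ → ℂ} {w₁ w₂ w₃ w₄ : ℂ → ℂ}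

/-- The paper's `F(z, A, B)`, for `x = (A, B)`. -/
def harmonicPair (g₁ g₂ g₃ g₄ : X → ℂ → ℂ) (x : X) (z : ℂ) : ℂ × ℂ :=
  (g₁ x z + conj (g₂ x z), g₃ x z + conj (g₄ x z))

theorem differentiableAt_harmonicPair (H₁ : IsPpolyPrimitiveFamily g₁ cA w₁)
    (H₂ : IsPpolyPrimitiveFamily g₂ cB w₂) (H₃ : IsPpolyPrimitiveFamily g₃ cB w₃)
    (H₄ : IsPpolyPrimitiveFamily g₄ cA w₄) (hA : ∀ i, cA (eA i) = Pi.single i 1)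
    (hB : ∀ j, cB (eB j) = Pi.single j 1) (x : X) {z : ℂ} (hz : z ∈ ball (0:ℂ) 1) :
    DifferentiableAt ℝ (fun q : X × ℂ => harmonicPair g₁ g₂ g₃ g₄ q.1 q.2) (x, z) :=
  ((H₁.differentiableAt hA x hz).add (H₂.differentiableAt hB x hz).star).prodMk
    ((H₃.differentiableAt hB x hz).add (H₄.differentiableAt hA x hz).star)

theorem harmonicPair_add_smul (H₁ : IsPpolyPrimitiveFamily g₁ cA w₁)
    (H₂ : IsPpolyPrimitiveFamily g₂ cB w₂) (H₃ : IsPpolyPrimitiveFamily g₃ cB w₃)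
    (H₄ : IsPpolyPrimitiveFamily g₄ cA w₄) (hA : ∀ i, cA (eA i) = Pi.single i 1)
    (hB : ∀ j, cB (eB j) = Pi.single j 1) {x y : X} {δ ε : ℂ} (hyA : cA y = Pi.single 0 δ)
    (hyB : cB y = Pi.single 0 ε) (t : ℝ) {z : ℂ} (hz : z ∈ ball (0:ℂ) 1) :
    harmonicPair g₁ g₂ g₃ g₄ (x + t • y) z = harmonicPair g₁ g₂ g₃ g₄ x z +
      t • (δ * (g₁ (eA 0) z - g₁ 0 z) + conj (ε * (g₂ (eB 0) z - g₂ 0 z)),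
        ε * (g₃ (eB 0) z - g₃ 0 z) + conj (δ * (g₄ (eA 0) z - g₄ 0 z))) := by
  simp only [harmonicPair, H₁.apply_add_smul hA hyA t hz, H₂.apply_add_smul hB hyB t hz,
    H₃.apply_add_smul hB hyB t hz, H₄.apply_add_smul hA hyA t hz]
  ext <;> simp [real_smul] <;> ring

theorem span_range_fderiv_harmonicPair_union_diagonal_eq_top
    (H₁ : IsPpolyPrimitiveFamily g₁ cA w₁) (H₂ : IsPpolyPrimitiveFamily g₂ cB w₂)
    (H₃ : IsPpolyPrimitiveFamily g₃ cB w₃) (H₄ : IsPpolyPrimitiveFamily g₄ cA w₄)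
    (hc : Function.Surjective (cA.prod cB)) (hA : ∀ i, cA (eA i) = Pi.single i 1)
    (hB : ∀ j, cB (eB j) = Pi.single j 1) {x : X} {z₁ z₂ : ℂ} (hz₁ : z₁ ∈ ball (0:ℂ) 1)
    (hz₂ : z₂ ∈ ball (0:ℂ) 1)
    (hdet : ‖g₄ (eA 0) z₁ - g₄ 0 z₁ - (g₄ (eA 0) z₂ - g₄ 0 z₂)‖ *
        ‖g₂ (eB 0) z₁ - g₂ 0 z₁ - (g₂ (eB 0) z₂ - g₂ 0 z₂)‖ <
      ‖g₁ (eA 0) z₁ - g₁ 0 z₁ - (g₁ (eA 0) z₂ - g₁ 0 z₂)‖ *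
        ‖g₃ (eB 0) z₁ - g₃ 0 z₁ - (g₃ (eB 0) z₂ - g₃ 0 z₂)‖) :
    Submodule.span ℝ (range (fderiv ℝ (fun p : X × ℂ × ℂ =>
        (harmonicPair g₁ g₂ g₃ g₄ p.1 p.2.1, harmonicPair g₁ g₂ g₃ g₄ p.1 p.2.2)) (x, z₁, z₂)) ∪
      {q : (ℂ × ℂ) × (ℂ × ℂ) | q.1 = q.2}) = ⊤ := by
  refine span_range_fderiv_union_diagonal_eq_top
    (differentiableAt_twoPoint (differentiableAt_harmonicPair H₁ H₂ H₃ H₄ hA hB x hz₁)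
      (differentiableAt_harmonicPair H₁ H₂ H₃ H₄ hA hB x hz₂)) fun w => ?_
  obtain ⟨δ, ε, hδ, hε⟩ := exists_mul_add_conj_mul_eq hdet w.1 w.2
  obtain ⟨y, hy⟩ := hc (Pi.single 0 δ, Pi.single 0 ε)
  obtain ⟨hyA, hyB⟩ := Prod.ext_iff.mp hy
  let W : ℂ → ℂ × ℂ := fun z =>
    (δ * (g₁ (eA 0) z - g₁ 0 z) + conj (ε * (g₂ (eB 0) z - g₂ 0 z)),
      ε * (g₃ (eB 0) z - g₃ 0 z) + conj (δ * (g₄ (eA 0) z - g₄ 0 z)))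
  refine ⟨(y, 0, 0), (W z₁, W z₂), fun t => ?_, ?_⟩
  · simp only [Prod.smul_mk, Prod.mk_add_mk, smul_zero, add_zero]
    rw [harmonicPair_add_smul H₁ H₂ H₃ H₄ hA hB hyA hyB t hz₁,
      harmonicPair_add_smul H₁ H₂ H₃ H₄ hA hB hyA hyB t hz₂]
  · simp only [W, Prod.ext_iff, Prod.fst_sub, Prod.snd_sub, map_sub, map_mul] at hδ hε ⊢
    exact ⟨by linear_combination hδ, by linear_combination hε⟩

theorem exists_forall_span_range_fderiv_harmonicPair_union_diagonal_eq_top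
    (H₁ : IsPpolyPrimitiveFamily g₁ cA w₁) (H₂ : IsPpolyPrimitiveFamily g₂ cB w₂)
    (H₃ : IsPpolyPrimitiveFamily g₃ cB w₃) (H₄ : IsPpolyPrimitiveFamily g₄ cA w₄)
    (hc : Function.Surjective (cA.prod cB)) (hw₁ : ContinuousAt w₁ 0) (hw₂ : ContinuousAt w₂ 0)
    (hw₃ : ContinuousAt w₃ 0) (hw₄ : ContinuousAt w₄ 0) (hw₁0 : w₁ 0 ≠ 0) (hw₂0 : w₂ 0 = 0)
    (hw₃0 : w₃ 0 ≠ 0) (hw₄0 : w₄ 0 = 0) :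
    ∃ η > (0:ℝ), ∀ (x : X) (z₁ z₂ : ℂ), z₁ ≠ z₂ → ‖z₁‖ < η → ‖z₂‖ < η →
      Submodule.span ℝ (range (fderiv ℝ (fun p : X × ℂ × ℂ =>
          (harmonicPair g₁ g₂ g₃ g₄ p.1 p.2.1, harmonicPair g₁ g₂ g₃ g₄ p.1 p.2.2)) (x, z₁, z₂)) ∪
        {q : (ℂ × ℂ) × (ℂ × ℂ) | q.1 = q.2}) = ⊤ := by
  obtain ⟨eA, hA⟩ : ∃ e : Fin (n + 1) → X, ∀ i, cA (e i) = Pi.single i 1 :=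
    ⟨fun i => (hc (Pi.single i 1, 0)).choose, fun i => congrArg Prod.fst (hc _).choose_spec⟩
  obtain ⟨eB, hB⟩ : ∃ e : Fin (m + 1) → X, ∀ j, cB (e j) = Pi.single j 1 :=
    ⟨fun j => (hc (0, Pi.single j 1)).choose, fun j => congrArg Prod.snd (hc _).choose_spec⟩
  obtain ⟨η, hη, hsmall⟩ := ((eventually_norm_mul_lt_norm_mul hw₁0 hw₃0
    (H₁.hasStrictDerivAt_sub hA hw₁) (H₃.hasStrictDerivAt_sub hB hw₃)
    (hw₄0 ▸ H₄.hasStrictDerivAt_sub hA hw₄) (hw₂0 ▸ H₂.hasStrictDerivAt_sub hB hw₂)).and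
    (prod_mem_nhds (ball_mem_nhds 0 one_pos) (ball_mem_nhds 0 one_pos))).exists_forall_norm_lt
  refine ⟨η, hη, fun x z₁ z₂ hne h₁ h₂ => ?_⟩
  obtain ⟨hdet, hz₁, hz₂⟩ := hsmall z₁ z₂ h₁ h₂
  exact span_range_fderiv_harmonicPair_union_diagonal_eq_top H₁ H₂ H₃ H₄ hc hA hB hz₁ hz₂
    (hdet hne)

end HarmonicPair

theorem transversality_to_diagonal_general
    (n₁ n₂ n₃ n₄ : ℕ)
    (h14 : n₁ < n₄) (h32 : n₃ < n₂)
    (t₁ t₂ t₃ t₄ : ℂ → ℂ)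
    (ht₁ : DifferentiableOn ℂ t₁ (ball (0:ℂ) 1))
    (ht₂ : DifferentiableOn ℂ t₂ (ball (0:ℂ) 1))
    (ht₃ : DifferentiableOn ℂ t₃ (ball (0:ℂ) 1))
    (ht₄ : DifferentiableOn ℂ t₄ (ball (0:ℂ) 1))
    (ht₁0 : t₁ 0 ≠ 0) (ht₃0 : t₃ 0 ≠ 0)
    (g₁ g₂ g₃ g₄ : (Fin (n₁ + 1) → ℂ) → (Fin (n₃ + 1) → ℂ) → ℂ → ℂ)
    (hg₁0 : ∀ A B, g₁ A B 0 = 0) (hg₂0 : ∀ A B, g₂ A B 0 = 0)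
    (hg₃0 : ∀ A B, g₃ A B 0 = 0) (hg₄0 : ∀ A B, g₄ A B 0 = 0)
    (hg₁ : ∀ A B, ∀ z ∈ ball (0:ℂ) 1,
      HasDerivAt (g₁ A B) (Ppoly n₁ A z * t₁ z) z)
    (hg₂ : ∀ A B, ∀ z ∈ ball (0:ℂ) 1,
      HasDerivAt (g₂ A B) (z ^ (n₂ - n₃) * (Ppoly n₃ B z * t₂ z)) z)
    (hg₃ : ∀ A B, ∀ z ∈ ball (0:ℂ) 1,
      HasDerivAt (g₃ A B) (Ppoly n₃ B z * t₃ z) z)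
    (hg₄ : ∀ A B, ∀ z ∈ ball (0:ℂ) 1,
      HasDerivAt (g₄ A B) (z ^ (n₄ - n₁) * (Ppoly n₁ A z * t₄ z)) z)
    (FF : (Fin (n₁ + 1) → ℂ) → (Fin (n₃ + 1) → ℂ) → ℂ → ℂ × ℂ)
    (hFF : ∀ A B z, FF A B z =
      (g₁ A B z + conj (g₂ A B z), g₃ A B z + conj (g₄ A B z)))
    (Φ : ((Fin (n₁ + 1) → ℂ) × (Fin (n₃ + 1) → ℂ)) × ℂ × ℂ → (ℂ × ℂ) × (ℂ × ℂ))
    (hΦ : ∀ A B z₁ z₂, Φ ((A, B), z₁, z₂) = (FF A B z₁, FF A B z₂)) :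
    ∃ η > (0:ℝ), ∀ (A : Fin (n₁ + 1) → ℂ) (B : Fin (n₃ + 1) → ℂ) (z₁ z₂ : ℂ),
      z₁ ≠ z₂ → ‖z₁‖ < η → ‖z₂‖ < η →
      Submodule.span ℝ
        (Set.range (fderiv ℝ Φ ((A, B), z₁, z₂)) ∪
          {p : (ℂ × ℂ) × (ℂ × ℂ) | p.1 = p.2}) = ⊤ := by
  obtain rfl : Φ = fun p => (harmonicPair (fun x => g₁ x.1 x.2) (fun x => g₂ x.1 x.2)
      (fun x => g₃ x.1 x.2) (fun x => g₄ x.1 x.2) p.1 p.2.1, harmonicPair (fun x => g₁ x.1 x.2)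
      (fun x => g₂ x.1 x.2) (fun x => g₃ x.1 x.2) (fun x => g₄ x.1 x.2) p.1 p.2.2) :=
    funext fun ⟨⟨A, B⟩, z₁, z₂⟩ => (hΦ A B z₁ z₂).trans (by rw [hFF, hFF]; rfl)
  have hcont {t : ℂ → ℂ} (ht : DifferentiableOn ℂ t (ball 0 1)) : ContinuousAt t 0 :=
    ht.continuousOn.continuousAt (ball_mem_nhds 0 one_pos)
  obtain ⟨η, hη, h⟩ := exists_forall_span_range_fderiv_harmonicPair_union_diagonal_eq_top
    (cA := ContinuousLinearMap.fst ℝ _ _) (cB := ContinuousLinearMap.snd ℝ _ _)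
    (w₂ := fun z => z ^ (n₂ - n₃) * t₂ z) (w₄ := fun z => z ^ (n₄ - n₁) * t₄ z)
    (fun _ => ⟨hg₁0 _ _, hg₁ _ _⟩)
    (fun _ => ⟨hg₂0 _ _, fun z hz => (hg₂ _ _ z hz).congr_deriv (mul_left_comm ..)⟩)
    (fun _ => ⟨hg₃0 _ _, hg₃ _ _⟩)
    (fun _ => ⟨hg₄0 _ _, fun z hz => (hg₄ _ _ z hz).congr_deriv (mul_left_comm ..)⟩)
    (fun v => ⟨v, rfl⟩) (hcont ht₁) ((continuousAt_id.pow _).mul (hcont ht₂)) (hcont ht₃)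
    ((continuousAt_id.pow _).mul (hcont ht₄)) ht₁0 (by simp [Nat.sub_ne_zero_of_lt h32]) ht₃0
    (by simp [Nat.sub_ne_zero_of_lt h14])
  exact ⟨η, hη, fun A B => h (A, B)⟩

/-- Let `Φ(A,B,z₁,z₂) = (F(z₁,A,B), F(z₂,A,B))`. Then there is `η > 0`
such that for all `(A,B)` and all `z₁ ≠ z₂` with `|z₁|, |z₂| < η`, the range of the real
Fréchet derivative of `Φ` at `(A,B,z₁,z₂)` together with the diagonal
`Δ = {(v,v)}` spans all of `ℝ⁴ × ℝ⁴ ≅ ℂ² × ℂ²`. -/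
theorem transversality_to_diagonal
    (n₁ n₂ n₃ n₄ : ℕ)
    (h12 : n₁ < n₂) (h13 : n₁ < n₃) (h14 : n₁ < n₄) (h32 : n₃ < n₂)
    (hsum : n₁ + n₂ = n₃ + n₄)
    (t₁ t₂ t₃ t₄ f₁ f₂ f₃ f₄ : ℂ → ℂ)
    (ht₁ : DifferentiableOn ℂ t₁ (ball (0:ℂ) 1))
    (ht₂ : DifferentiableOn ℂ t₂ (ball (0:ℂ) 1))
    (ht₃ : DifferentiableOn ℂ t₃ (ball (0:ℂ) 1))
    (ht₄ : DifferentiableOn ℂ t₄ (ball (0:ℂ) 1))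
    (ht₁0 : t₁ 0 ≠ 0) (ht₂0 : t₂ 0 ≠ 0) (ht₃0 : t₃ 0 ≠ 0) (ht₄0 : t₄ 0 ≠ 0)
    (hf₁ : ∀ z ∈ ball (0:ℂ) 1, HasDerivAt f₁ (z ^ n₁ * t₁ z) z)
    (hf₂ : ∀ z ∈ ball (0:ℂ) 1, HasDerivAt f₂ (z ^ n₂ * t₂ z) z)
    (hf₃ : ∀ z ∈ ball (0:ℂ) 1, HasDerivAt f₃ (z ^ n₃ * t₃ z) z)
    (hf₄ : ∀ z ∈ ball (0:ℂ) 1, HasDerivAt f₄ (z ^ n₄ * t₄ z) z)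
    (hconf : ∀ z ∈ ball (0:ℂ) 1,
      (z ^ n₁ * t₁ z) * (z ^ n₂ * t₂ z) + (z ^ n₃ * t₃ z) * (z ^ n₄ * t₄ z) = 0)
    (g₁ g₂ g₃ g₄ : (Fin (n₁ + 1) → ℂ) → (Fin (n₃ + 1) → ℂ) → ℂ → ℂ)
    (hg₁0 : ∀ A B, g₁ A B 0 = 0) (hg₂0 : ∀ A B, g₂ A B 0 = 0)
    (hg₃0 : ∀ A B, g₃ A B 0 = 0) (hg₄0 : ∀ A B, g₄ A B 0 = 0)
    (hg₁ : ∀ A B, ∀ z ∈ ball (0:ℂ) 1,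
      HasDerivAt (g₁ A B) (Ppoly n₁ A z * t₁ z) z)
    (hg₂ : ∀ A B, ∀ z ∈ ball (0:ℂ) 1,
      HasDerivAt (g₂ A B) (z ^ (n₂ - n₃) * (Ppoly n₃ B z * t₂ z)) z)
    (hg₃ : ∀ A B, ∀ z ∈ ball (0:ℂ) 1,
      HasDerivAt (g₃ A B) (Ppoly n₃ B z * t₃ z) z)
    (hg₄ : ∀ A B, ∀ z ∈ ball (0:ℂ) 1,
      HasDerivAt (g₄ A B) (z ^ (n₄ - n₁) * (Ppoly n₁ A z * t₄ z)) z)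
    (FF : (Fin (n₁ + 1) → ℂ) → (Fin (n₃ + 1) → ℂ) → ℂ → ℂ × ℂ)
    (hFF : ∀ A B z, FF A B z =
      (g₁ A B z + conj (g₂ A B z), g₃ A B z + conj (g₄ A B z)))
    (Φ : ((Fin (n₁ + 1) → ℂ) × (Fin (n₃ + 1) → ℂ)) × ℂ × ℂ → (ℂ × ℂ) × (ℂ × ℂ))
    (hΦ : ∀ A B z₁ z₂, Φ ((A, B), z₁, z₂) = (FF A B z₁, FF A B z₂)) :
    ∃ η > (0:ℝ), ∀ (A : Fin (n₁ + 1) → ℂ) (B : Fin (n₃ + 1) → ℂ) (z₁ z₂ : ℂ),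
      z₁ ≠ z₂ → ‖z₁‖ < η → ‖z₂‖ < η →
      Submodule.span ℝ
        (Set.range (fderiv ℝ Φ ((A, B), z₁, z₂)) ∪
          {p : (ℂ × ℂ) × (ℂ × ℂ) | p.1 = p.2}) = ⊤ :=
  transversality_to_diagonal_general n₁ n₂ n₃ n₄ h14 h32 t₁ t₂ t₃ t₄ ht₁ ht₂ ht₃ ht₄ ht₁0 ht₃0 g₁ g₂
    g₃ g₄ hg₁0 hg₂0 hg₃0 hg₄0 hg₁ hg₂ hg₃ hg₄ FF hFF Φ hΦ
end
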